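/- Let α, β ∈ ℝ. If the restrictions of Ω_α and Ω_β to the subgroup Λ = ℤ³ ⊕ ℤ³ are cohomologous, i.e. there exists a map μ : ℤ³ ⊕ ℤ³ → S¹ such that Ω_α(g,h) = μ(g) μ(h) μ(g+h)⁻¹ Ω_β(g,h) for all g, h ∈ ℤ³ ⊕ ℤ³, then 2(α − β) is an integer. -/

import Mathlib

open Matrix

/-- The additive group `R³ ⊕ R³`. -/
abbrev VV (R : Type*) := (Fin 3 → R) × (Fin 3 → R)

/-- Transpose, as a map on `SL(3,R)`. -/
def transposeSL {R : Type*} [CommRing R] (A : Matrix.SpecialLinearGroup (Fin 3) R) :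
    Matrix.SpecialLinearGroup (Fin 3) R :=
  ⟨A.val.transpose, by rw [Matrix.det_transpose]; exact A.prop⟩

/-- The group homomorphism `A ↦ (Aᵀ)⁻¹` on `SL(3,R)`. -/
def dualHom {R : Type*} [CommRing R] :
    Matrix.SpecialLinearGroup (Fin 3) R →* Matrix.SpecialLinearGroup (Fin 3) R where
  toFun A := (transposeSL A)⁻¹
  map_one' := by
    simp [transposeSL]
    exact inv_eq_one.mpr (Subtype.ext rfl)
  map_mul' A B := by
    show (transposeSL (A * B))⁻¹ = (transposeSL A)⁻¹ * (transposeSL B)⁻¹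
    have h : transposeSL (A * B) = transposeSL B * transposeSL A :=
      Subtype.ext (by simp [transposeSL, Matrix.transpose_mul]; rfl)
    rw [h, _root_.mul_inv_rev]

/-- The multiplicative group structure on `AddAut A` (composition), as in the older Mathlib. -/
instance AddAut.group (A : Type*) [Add A] : Group (AddAut A) where
  mul g h := AddEquiv.trans h g
  one := AddEquiv.refl _
  inv := AddEquiv.symm
  mul_assoc _ _ _ := rfl
  one_mul _ := rfl
  mul_one _ := rfl
  inv_mul_cancel := AddEquiv.self_trans_symm

/-- Linear automorphisms as additive automorphisms, as a group homomorphism. -/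
def linToAddAut {R : Type*} [CommRing R] :
    ((Fin 3 → R) ≃ₗ[R] (Fin 3 → R)) →* AddAut (Fin 3 → R) where
  toFun e := e.toAddEquiv
  map_one' := rfl
  map_mul' _ _ := rfl

/-- Pairs of additive automorphisms give additive automorphisms of the product. -/
def addAutProd {R : Type*} [CommRing R] :
    AddAut (Fin 3 → R) × AddAut (Fin 3 → R) →* AddAut (VV R) where
  toFun p := AddEquiv.prodCongr p.1 p.2
  map_one' := rfl
  map_mul' _ _ := rfl

/-- The action of `SL(3,R)` on `R³ ⊕ R³` given by `A · (x,y) = (Ax, (Aᵀ)⁻¹y)`,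
as a homomorphism into additive automorphisms. -/
noncomputable def sl3Act {R : Type*} [CommRing R] :
    Matrix.SpecialLinearGroup (Fin 3) R →* AddAut (VV R) :=
  addAutProd.comp
    (((linToAddAut.comp Matrix.SpecialLinearGroup.toLin')).prod
      ((linToAddAut.comp Matrix.SpecialLinearGroup.toLin').comp dualHom))

/-- Additive automorphisms as multiplicative automorphisms of `Multiplicative`. -/
def addAutToMulAut {A : Type*} [AddGroup A] : AddAut A →* MulAut (Multiplicative A) where
  toFun e := AddEquiv.toMultiplicative e
  map_one' := rfl
  map_mul' _ _ := rfl

/-- The action of `SL(3,R)` on `Multiplicative (R³ ⊕ R³)`. -/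
noncomputable def sl3ActM (R : Type*) [CommRing R] :
    Matrix.SpecialLinearGroup (Fin 3) R →* MulAut (Multiplicative (VV R)) :=
  addAutToMulAut.comp sl3Act

/-- The group `Γ_R = (R³ ⊕ R³) ⋊ SL(3,R)`. -/
abbrev GammaR (R : Type*) [CommRing R] :=
  SemidirectProduct (Multiplicative (VV R)) (Matrix.SpecialLinearGroup (Fin 3) R) (sl3ActM R)

/-- Coordinatewise integer casting `ℤ³ → ℚ³` as an additive homomorphism. -/
def intCast3 : (Fin 3 → ℤ) →+ (Fin 3 → ℚ) := (Int.castAddHom ℚ).compLeft (Fin 3)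

/-- The inclusion `ℤ³ ⊕ ℤ³ → ℚ³ ⊕ ℚ³`. -/
def intVec : VV ℤ →+ VV ℚ := intCast3.prodMap intCast3

/-- The subgroup `Λ = ℤ³ ⊕ ℤ³` of `Γ = (ℚ³ ⊕ ℚ³) ⋊ SL(3,ℚ)`. -/
noncomputable def LambdaSub : Subgroup (GammaR ℚ) :=
  (AddSubgroup.toSubgroup intVec.range).map SemidirectProduct.inl

/-- The dot product on `R³`. -/
def dotR {R : Type*} [CommRing R] (x y : Fin 3 → R) : R := ∑ i, x i * y i

/-- The 2-cocycle `Ω_α` on `ℚ³ ⊕ ℚ³`. -/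
noncomputable def OmegaQ (α : ℝ) (g h : VV ℚ) : Circle :=
  Circle.exp (2 * Real.pi * α * ((dotR g.1 h.2 - dotR g.2 h.1 : ℚ) : ℝ))

/-- The extension `Ω̃_α` of `Ω_α` to `Γ = (ℚ³ ⊕ ℚ³) ⋊ SL(3,ℚ)`. -/
noncomputable def OmegaT (α : ℝ) (g h : GammaR ℚ) : Circle :=
  OmegaQ α (Multiplicative.toAdd g.left) (sl3Act g.right (Multiplicative.toAdd h.left))

/-!
A coboundary `μ g * μ h * (μ (g + h))⁻¹` is symmetric in `g, h` because the group is abelian, so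
cohomologous cocycles have the same antisymmetrization `Ω g h / Ω h g`. For `Ω_α` this
antisymmetrization is `Ω_{2α}`, and on the pair `g = (e₁, 0)`, `h = (0, e₁)` of `ℤ³ ⊕ ℤ³` it takes
the value `exp (2πi · 2α)`. Hence `exp (2πi · 2α) = exp (2πi · 2β)`, i.e. `2α − 2β ∈ ℤ`.
-/

open Real

theorem div_swap_eq_of_cohomologous {G M : Type*} [AddCommMagma G] [CommGroup M]
    {Ω Ω' : G → G → M} (μ : G → M)
    (hΩ : ∀ g h, Ω g h = μ g * μ h * (μ (g + h))⁻¹ * Ω' g h) (g h : G) :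
    Ω g h / Ω h g = Ω' g h / Ω' h g := by
  rw [hΩ g h, hΩ h g, add_comm h g, mul_comm (μ h) (μ g)]
  exact mul_div_mul_left_eq_div _ _ _

theorem dotR_comm {R : Type*} [CommRing R] (x y : Fin 3 → R) : dotR x y = dotR y x := by
  simp only [dotR, mul_comm]

theorem OmegaQ_div_swap (α : ℝ) (g h : VV ℚ) :
    OmegaQ α g h / OmegaQ α h g = OmegaQ (2 * α) g h := by
  simp only [OmegaQ, ← Circle.exp_sub, dotR_comm h.1, dotR_comm h.2]
  push_cast
  ring_nf

theorem OmegaQ_intVec_single (α : ℝ) :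
    OmegaQ α (intVec (Pi.single 0 1, 0)) (intVec (0, Pi.single 0 1)) =
      Circle.exp (2 * π * α) := by
  have hω : (dotR (intVec (Pi.single 0 1, 0)).1 (intVec (0, Pi.single 0 1)).2 -
      dotR (intVec (Pi.single 0 1, 0)).2 (intVec (0, Pi.single 0 1)).1 : ℚ) = 1 := by
    simp [dotR, intVec, intCast3, Pi.single_apply]
  rw [OmegaQ, hω, Rat.cast_one, mul_one]

theorem Circle.exists_int_sub_eq_of_exp_two_pi_mul_eq {a b : ℝ}
    (h : Circle.exp (2 * π * a) = Circle.exp (2 * π * b)) : ∃ n : ℤ, a - b = n := by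
  obtain ⟨n, hn⟩ := Circle.exp_eq_exp.mp h
  refine ⟨n, mul_left_cancel₀ two_pi_pos.ne' ?_⟩
  linear_combination hn

/-- If the restrictions of `Ω_α` and `Ω_β` to `Λ = ℤ³ ⊕ ℤ³` are
cohomologous, then `2(α − β)` is an integer. -/
theorem two_mul_sub_int_of_cohomologous (α β : ℝ)
    (h : ∃ μ : VV ℤ → Circle, ∀ g h' : VV ℤ,
      OmegaQ α (intVec g) (intVec h') =
        μ g * μ h' * (μ (g + h'))⁻¹ * OmegaQ β (intVec g) (intVec h')) :
    ∃ n : ℤ, 2 * (α - β) = (n : ℝ) := by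
  obtain ⟨μ, hμ⟩ := h
  have hswap := div_swap_eq_of_cohomologous μ hμ (Pi.single 0 1, 0) (0, Pi.single 0 1)
  rw [OmegaQ_div_swap, OmegaQ_div_swap, OmegaQ_intVec_single, OmegaQ_intVec_single] at hswap
  obtain ⟨n, hn⟩ := Circle.exists_int_sub_eq_of_exp_two_pi_mul_eq hswap
  exact ⟨n, by rw [mul_sub, hn]⟩
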